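/- Let (X,μ) be a measure space, p ≥ 2, p' = p/(p-1), and let f, g be nonzero elements of L^p(X,μ). Then 1 − ‖(D_p(f) + D_p(g))/2‖_{p'} ≤ ‖(D_p(f) − D_p(g))/2‖_{p'} · ‖f − g‖_p/(‖f‖_p + ‖g‖_p), where D_p(h) = ‖h‖_p^{1-p}|h|^{p-2}h. -/

import Mathlib

/-!
Since `∫ D_p(h) h = ‖h‖_p`, the sum `‖f‖_p + ‖g‖_p` equals
`∫ ((D_p f + D_p g)/2) (f + g) + ∫ ((D_p f - D_p g)/2) (f - g)`; bounding the first integral by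
Hölder and Minkowski and the second by Hölder gives the estimate after dividing by
`‖f‖_p + ‖g‖_p`.
-/

open MeasureTheory

noncomputable def Lnorm {X : Type*} [MeasurableSpace X] (μ : Measure X) (p : ℝ) (f : X → ℝ) : ℝ :=
  (∫ x, |f x| ^ p ∂μ) ^ (1 / p)

/-- The duality map `D_p(h) = ‖h‖_p^{1-p} |h|^{p-2} h`. -/
noncomputable def dualMap {X : Type*} [MeasurableSpace X] (μ : Measure X) (p : ℝ)
    (h : X → ℝ) : X → ℝ :=
  fun x => Lnorm μ p h ^ (1 - p) * (|h x| ^ (p - 2) * h x)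

section LebesgueNorm

variable {X : Type*} [MeasurableSpace X] {μ : Measure X} {p q : ℝ}

lemma lnorm_nonneg (μ : Measure X) (p : ℝ) (f : X → ℝ) : 0 ≤ Lnorm μ p f := by
  unfold Lnorm; positivity

lemma lnorm_rpow_self (hp : p ≠ 0) (f : X → ℝ) :
    Lnorm μ p f ^ p = ∫ x, |f x| ^ p ∂μ := by
  rw [Lnorm, ← Real.rpow_mul (by positivity), one_div, inv_mul_cancel₀ hp, Real.rpow_one]

lemma lnorm_eq_lpNorm (hp : 0 < p) {f : X → ℝ} (hf : AEStronglyMeasurable f μ) :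
    Lnorm μ p f = lpNorm f (ENNReal.ofReal p) μ := by
  rw [lpNorm_eq_integral_norm_rpow_toReal (by simpa using hp) ENNReal.ofReal_ne_top hf]
  simp [Lnorm, ENNReal.toReal_ofReal hp.le, Real.norm_eq_abs]

lemma lnorm_add_le (hp : 1 ≤ p) {f g : X → ℝ} (hf : MemLp f (ENNReal.ofReal p) μ)
    (hg : MemLp g (ENNReal.ofReal p) μ) :
    Lnorm μ p (fun x => f x + g x) ≤ Lnorm μ p f + Lnorm μ p g := by
  have hp₀ : 0 < p := by linarith
  calc Lnorm μ p (fun x => f x + g x) = lpNorm (f + g) (ENNReal.ofReal p) μ :=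
        lnorm_eq_lpNorm hp₀ (hf.add hg).1
    _ ≤ lpNorm f (ENNReal.ofReal p) μ + lpNorm g (ENNReal.ofReal p) μ :=
        lpNorm_add_le hf (by simpa using hp)
    _ = Lnorm μ p f + Lnorm μ p g := by
        rw [lnorm_eq_lpNorm hp₀ hf.1, lnorm_eq_lpNorm hp₀ hg.1]

lemma integrable_mul_of_holderConjugate (hpq : p.HolderConjugate q) {u v : X → ℝ}
    (hu : MemLp u (ENNReal.ofReal p) μ) (hv : MemLp v (ENNReal.ofReal q) μ) :
    Integrable (fun x => u x * v x) μ :=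
  have := hpq.ennrealOfReal
  hu.integrable_mul hv

lemma integral_mul_le_lnorm_mul_lnorm (hpq : p.HolderConjugate q) {u v : X → ℝ}
    (hu : MemLp u (ENNReal.ofReal p) μ) (hv : MemLp v (ENNReal.ofReal q) μ) :
    ∫ x, u x * v x ∂μ ≤ Lnorm μ p u * Lnorm μ q v := by
  have huv := integrable_mul_of_holderConjugate hpq hu hv
  calc ∫ x, u x * v x ∂μ ≤ ∫ x, ‖u x‖ * ‖v x‖ ∂μ := by
        refine integral_mono huv ?_ fun x => ?_
        · simpa only [norm_mul] using huv.norm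
        · rw [← norm_mul]; exact Real.le_norm_self _
    _ ≤ Lnorm μ p u * Lnorm μ q v := by
        simpa only [Real.norm_eq_abs, Lnorm] using integral_mul_norm_le_Lp_mul_Lq hpq hu hv

end LebesgueNorm

section DualityMap

variable {X : Type*} [MeasurableSpace X] {μ : Measure X} {p q : ℝ}

lemma abs_rpow_sub_two_mul_self_mul_self (hp : p ≠ 0) (t : ℝ) :
    |t| ^ (p - 2) * t * t = |t| ^ p := by
  rcases eq_or_ne t 0 with rfl | ht
  · simp [Real.zero_rpow hp]
  · rw [mul_assoc, ← abs_mul_abs_self, ← mul_assoc, ← Real.rpow_add_one (abs_ne_zero.mpr ht),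
      ← Real.rpow_add_one (abs_ne_zero.mpr ht)]
    ring_nf

lemma abs_abs_rpow_sub_two_mul_self (hp : p ≠ 1) (t : ℝ) :
    |(|t| ^ (p - 2) * t)| = |t| ^ (p - 1) := by
  rcases eq_or_ne t 0 with rfl | ht
  · simp [Real.zero_rpow (sub_ne_zero.mpr hp)]
  · rw [abs_mul, abs_of_nonneg (by positivity), ← Real.rpow_add_one (abs_ne_zero.mpr ht)]
    ring_nf

lemma memLp_dualMap (hpq : p.HolderConjugate q) {f : X → ℝ}
    (hf : MemLp f (ENNReal.ofReal p) μ) :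
    MemLp (dualMap μ p f) (ENNReal.ofReal q) μ := by
  have habs := hf.norm_rpow_div (ENNReal.ofReal (p - 1))
  rw [ENNReal.toReal_ofReal hpq.sub_one_pos.le, ← ENNReal.ofReal_div_of_pos hpq.sub_one_pos,
    ← hpq.conjugate_eq] at habs
  have hmeas := hf.1.aemeasurable
  refine MemLp.const_mul (habs.of_le (by fun_prop : AEMeasurable _ μ).aestronglyMeasurable
    (.of_forall fun x => ?_)) _
  simp only [Real.norm_eq_abs, abs_abs_rpow_sub_two_mul_self hpq.lt.ne']
  exact le_abs_self _

lemma integral_dualMap_mul_self (hp : p ≠ 0) (f : X → ℝ) :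
    ∫ x, dualMap μ p f x * f x ∂μ = Lnorm μ p f := by
  calc ∫ x, dualMap μ p f x * f x ∂μ = ∫ x, Lnorm μ p f ^ (1 - p) * |f x| ^ p ∂μ := by
        congr 1 with x
        rw [dualMap, mul_assoc, abs_rpow_sub_two_mul_self_mul_self hp]
    _ = Lnorm μ p f ^ (1 - p) * Lnorm μ p f ^ p := by rw [integral_const_mul, lnorm_rpow_self hp]
    _ = Lnorm μ p f := by
        rw [← Real.rpow_add' (lnorm_nonneg μ p f) (by simp), sub_add_cancel, Real.rpow_one]

end DualityMap

section DualityEstimate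

variable {X : Type*} [MeasurableSpace X] {μ : Measure X} {p q : ℝ}

lemma mul_one_sub_lnorm_half_add_le (hpq : p.HolderConjugate q) {f g u v : X → ℝ}
    (hf : MemLp f (ENNReal.ofReal p) μ) (hg : MemLp g (ENNReal.ofReal p) μ)
    (hu : MemLp u (ENNReal.ofReal q) μ) (hv : MemLp v (ENNReal.ofReal q) μ)
    (huf : ∫ x, u x * f x ∂μ = Lnorm μ p f) (hvg : ∫ x, v x * g x ∂μ = Lnorm μ p g) :
    (Lnorm μ p f + Lnorm μ p g) * (1 - Lnorm μ q (fun x => (u x + v x) / 2)) ≤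
      Lnorm μ q (fun x => (u x - v x) / 2) * Lnorm μ p (fun x => f x - g x) := by
  have hS : MemLp (fun x => (u x + v x) / 2) (ENNReal.ofReal q) μ := by
    simpa only [div_eq_mul_inv, Pi.add_apply] using (hu.add hv).mul_const 2⁻¹
  have hT : MemLp (fun x => (u x - v x) / 2) (ENNReal.ofReal q) μ := by
    simpa only [div_eq_mul_inv, Pi.sub_apply] using (hu.sub hv).mul_const 2⁻¹
  have hfg : MemLp (fun x => f x + g x) (ENNReal.ofReal p) μ := hf.add hg
  have hf_g : MemLp (fun x => f x - g x) (ENNReal.ofReal p) μ := hf.sub hg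
  have hsplit : ∫ x, (u x + v x) / 2 * (f x + g x) ∂μ +
      ∫ x, (u x - v x) / 2 * (f x - g x) ∂μ = Lnorm μ p f + Lnorm μ p g := by
    rw [← huf, ← hvg,
      ← integral_add (integrable_mul_of_holderConjugate hpq.symm hS hfg)
        (integrable_mul_of_holderConjugate hpq.symm hT hf_g),
      ← integral_add (integrable_mul_of_holderConjugate hpq.symm hu hf)
        (integrable_mul_of_holderConjugate hpq.symm hv hg)]
    congr 1 with x
    ring
  have hsum : ∫ x, (u x + v x) / 2 * (f x + g x) ∂μ ≤
      Lnorm μ q (fun x => (u x + v x) / 2) * (Lnorm μ p f + Lnorm μ p g) :=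
    (integral_mul_le_lnorm_mul_lnorm hpq.symm hS hfg).trans <|
      mul_le_mul_of_nonneg_left (lnorm_add_le hpq.lt.le hf hg) (lnorm_nonneg μ q _)
  have hdiff := integral_mul_le_lnorm_mul_lnorm hpq.symm hT hf_g
  linarith

end DualityEstimate

theorem stmt16_general {X : Type*} [MeasurableSpace X] (μ : Measure X) (p p' : ℝ)
    (hp : 2 ≤ p) (hpp' : 1 / p + 1 / p' = 1)
    (f g : X → ℝ)
    (hf : MemLp f (ENNReal.ofReal p) μ) (hg : MemLp g (ENNReal.ofReal p) μ)
    (hfn : 0 < Lnorm μ p f) :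
    1 - Lnorm μ p' (fun x => (dualMap μ p f x + dualMap μ p g x) / 2) ≤
      Lnorm μ p' (fun x => (dualMap μ p f x - dualMap μ p g x) / 2) *
        (Lnorm μ p (fun x => f x - g x) / (Lnorm μ p f + Lnorm μ p g)) := by
  have hpq : p.HolderConjugate p' :=
    Real.holderConjugate_iff.mpr ⟨by linarith, by simpa only [one_div] using hpp'⟩
  have hnorm_pos : 0 < Lnorm μ p f + Lnorm μ p g :=
    add_pos_of_pos_of_nonneg hfn (lnorm_nonneg μ p g)
  have key := mul_one_sub_lnorm_half_add_le hpq hf hg (memLp_dualMap hpq hf) (memLp_dualMap hpq hg)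
    (integral_dualMap_mul_self hpq.ne_zero f) (integral_dualMap_mul_self hpq.ne_zero g)
  rw [mul_div_assoc', le_div_iff₀ hnorm_pos]
  linarith

/-- Key duality estimate in the proof of Lemma `modcont`:
`1 − ‖(D_p(f) + D_p(g))/2‖_{p'} ≤ ‖(D_p(f) − D_p(g))/2‖_{p'} ‖f − g‖_p / (‖f‖_p + ‖g‖_p)`. -/
theorem stmt16 {X : Type*} [MeasurableSpace X] (μ : Measure X) (p p' : ℝ)
    (hp : 2 ≤ p) (hpp' : 1 / p + 1 / p' = 1)
    (f g : X → ℝ)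
    (hf : MemLp f (ENNReal.ofReal p) μ) (hg : MemLp g (ENNReal.ofReal p) μ)
    (hfn : 0 < Lnorm μ p f) (hgn : 0 < Lnorm μ p g) :
    1 - Lnorm μ p' (fun x => (dualMap μ p f x + dualMap μ p g x) / 2) ≤
      Lnorm μ p' (fun x => (dualMap μ p f x - dualMap μ p g x) / 2) *
        (Lnorm μ p (fun x => f x - g x) / (Lnorm μ p f + Lnorm μ p g)) :=
  stmt16_general μ p p' hp hpp' f g hf hg hfn
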